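/- arXiv:2410.15331 — 2 statements merged into one kernel-verified Lean document; each statement's English description precedes it below -/
import Mathlib

section
/- If m₀ is symmetric positive semidefinite and Λ⁺ = diag(λ₁,...,λₙ) with λᵢ > -1, then the matrix m with entries m_{ij} = (m₀)_{ij}/(λᵢ+λⱼ+2) is symmetric positive semidefinite. -/
open MeasureTheory intervalIntegral Matrix

theorem sbfem_mass_posSemidef {n : ℕ} (lam : Fin n → ℝ)
    (hlam : ∀ i, -1 < lam i) (m₀ : Matrix (Fin n) (Fin n) ℝ)
    (hm₀ : m₀.PosSemidef) :
    (Matrix.of fun i j => m₀ i j / (lam i + lam j + 2)).PosSemidef := by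
  have hsym : ∀ i j, m₀ j i = m₀ i j := fun i j => by
    simpa using hm₀.1.apply i j
  refine Matrix.posSemidef_iff_dotProduct_mulVec.mpr ⟨?_, ?_⟩
  · ext i j
    simp [Matrix.conjTranspose_apply, hsym i j]
    ring
  · intro x
    have hp : ∀ i j : Fin n, (-1:ℝ) < lam i + lam j + 1 := fun i j => by
      have := hlam i; have := hlam j; linarith
    have key : ∀ i j : Fin n, x i * m₀ i j * x j / (lam i + lam j + 2)
        = ∫ t in (0:ℝ)..1, x i * m₀ i j * x j * t ^ (lam i + lam j + 1) := by
      intro i j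
      rw [intervalIntegral.integral_const_mul, integral_rpow (Or.inl (hp i j))]
      rw [Real.one_rpow, Real.zero_rpow (by linarith [hp i j] : lam i + lam j + 1 + 1 ≠ 0)]
      field_simp
      ring
    have hx : star x = x := by simp
    have expand : star x ⬝ᵥ (Matrix.of fun i j => m₀ i j / (lam i + lam j + 2)) *ᵥ x
        = ∑ i, ∑ j, x i * m₀ i j * x j / (lam i + lam j + 2) := by
      rw [hx]
      simp [dotProduct, Matrix.mulVec, Finset.mul_sum]
      congr 1; ext i; congr 1; ext j; ring
    rw [expand]
    have hint : ∀ (i j : Fin n), IntervalIntegrable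
        (fun t : ℝ => x i * m₀ i j * x j * t ^ (lam i + lam j + 1)) volume 0 1 :=
      fun i j => (intervalIntegrable_rpow' (hp i j)).const_mul _
    calc ∑ i, ∑ j, x i * m₀ i j * x j / (lam i + lam j + 2)
        = ∫ t in (0:ℝ)..1, ∑ i, ∑ j, x i * m₀ i j * x j * t ^ (lam i + lam j + 1) := by
          have h2 : ∀ i : Fin n, ∫ t in (0:ℝ)..1, ∑ j, x i * m₀ i j * x j * t ^ (lam i + lam j + 1)
              = ∑ j, ∫ t in (0:ℝ)..1, x i * m₀ i j * x j * t ^ (lam i + lam j + 1) :=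
            fun i => intervalIntegral.integral_finset_sum (fun j _ => hint i j)
          have hintsum : ∀ i : Fin n, IntervalIntegrable
              (fun t : ℝ => ∑ j, x i * m₀ i j * x j * t ^ (lam i + lam j + 1)) volume 0 1 := by
            intro i
            have h := IntervalIntegrable.sum (μ := volume) (a := (0:ℝ)) (b := 1)
              (f := fun (j : Fin n) (t : ℝ) => x i * m₀ i j * x j * t ^ (lam i + lam j + 1))
              Finset.univ (fun j _ => hint i j)
            simpa [Finset.sum_fn] using h
          have h1 : ∫ t in (0:ℝ)..1, ∑ i, ∑ j, x i * m₀ i j * x j * t ^ (lam i + lam j + 1)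
              = ∑ i, ∫ t in (0:ℝ)..1, ∑ j, x i * m₀ i j * x j * t ^ (lam i + lam j + 1) :=
            intervalIntegral.integral_finset_sum
              (f := fun (i : Fin n) (t : ℝ) => ∑ j, x i * m₀ i j * x j * t ^ (lam i + lam j + 1))
              (fun i _ => hintsum i)
          rw [h1]
          refine Finset.sum_congr rfl fun i _ => ?_
          rw [h2 i]
          exact Finset.sum_congr rfl fun j _ => key i j
      _ ≥ 0 := by
          apply intervalIntegral.integral_nonneg_of_ae_restrict (by norm_num)
          have h0 : ∀ᵐ t ∂(volume : Measure ℝ), t ≠ 0 := by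
            rw [MeasureTheory.ae_iff]
            simp [Real.volume_singleton (a := 0)]
          filter_upwards [ae_restrict_of_ae h0,
            ae_restrict_mem (measurableSet_Icc : MeasurableSet (Set.Icc (0:ℝ) 1))]
            with t ht0 htI
          have ht : 0 < t := lt_of_le_of_ne htI.1 (Ne.symm ht0)
          have := hm₀.dotProduct_mulVec_nonneg (fun i => x i * t ^ (lam i + 1/2))
          rw [show (star fun i => x i * t ^ (lam i + 1/2)) = fun i => x i * t ^ (lam i + 1/2) by simp] at this
          calc (0:ℝ) ≤ (fun i => x i * t ^ (lam i + 1/2)) ⬝ᵥ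
              m₀ *ᵥ (fun i => x i * t ^ (lam i + 1/2)) := this
            _ = ∑ i, ∑ j, x i * m₀ i j * x j * t ^ (lam i + lam j + 1) := by
              have hmul : ∀ i j : Fin n, t ^ (lam i + 1/2) * t ^ (lam j + 1/2)
                  = t ^ (lam i + lam j + 1) := fun i j => by
                rw [← Real.rpow_add ht]; ring_nf
              simp only [dotProduct, Matrix.mulVec, Finset.mul_sum]
              refine Finset.sum_congr rfl fun i _ => Finset.sum_congr rfl fun j _ => ?_
              rw [← hmul i j]; ring
end

section
/- The Wachspress coordinates φ_k on a strictly convex polygon satisfy linear precision: Σ_k φ_k(x)·x_k = x for every x in the interior of the polygon. -/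
/-!
Write `hᵢ(x) = ⟨vᵢ - x, nᵢ⟩` for the height of `x` below the line of edge `i` and `J` for the
rotation `perp` by a right angle. Since `v_k` lies on edges `k-1` and `k`, the weight `w_k` may be
written with both heights measured from `v_k`, and Cramer's rule for the two edge lines through
`v_k` gives `w_k (v_k - x) = J n_{k-1} / h_{k-1}(x) - J n_k / h_k(x)`. Summing over `k` telescopes
to `∑ w_k (v_k - x) = 0`, and dividing by the positive `∑ w_k` gives linear precision.
-/

/-- Dot product in the plane. -/
def dot (a b : ℝ × ℝ) : ℝ := a.1 * b.1 + a.2 * b.2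

/-- 2×2 determinant of two plane vectors. -/
def cross (a b : ℝ × ℝ) : ℝ := a.1 * b.2 - a.2 * b.1

/-- Wachspress weight at vertex `k`: the two edges meeting at vertex `k` are
edge `k-1` (joining `v (k-1)` and `v k`, outward unit normal `nrm (k-1)`) and
edge `k` (joining `v k` and `v (k+1)`, outward unit normal `nrm k`). -/
noncomputable def w {n : ℕ} [NeZero n] (v nrm : Fin n → ℝ × ℝ)
    (k : Fin n) (x : ℝ × ℝ) : ℝ :=
  cross (nrm (k - 1)) (nrm k) /
    (dot (v (k - 1) - x) (nrm (k - 1)) * dot (v k - x) (nrm k))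

/-- Wachspress coordinate `φ_k = w_k / ∑ⱼ wⱼ`. -/
noncomputable def φ {n : ℕ} [NeZero n] (v nrm : Fin n → ℝ × ℝ)
    (k : Fin n) (x : ℝ × ℝ) : ℝ :=
  w v nrm k x / ∑ j : Fin n, w v nrm j x

def perp (a : ℝ × ℝ) : ℝ × ℝ := (-a.2, a.1)

theorem cross_smul_eq_dot_smul_perp_sub (a b p : ℝ × ℝ) :
    cross a b • p = dot p b • perp a - dot p a • perp b := by
  ext <;> simp only [cross, dot, perp, Prod.smul_fst, Prod.smul_snd, Prod.fst_sub,
    Prod.snd_sub, smul_eq_mul] <;> ring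

theorem cross_div_dot_mul_dot_smul {a b p : ℝ × ℝ} (ha : dot p a ≠ 0) (hb : dot p b ≠ 0) :
    (cross a b / (dot p a * dot p b)) • p = (dot p a)⁻¹ • perp a - (dot p b)⁻¹ • perp b := by
  rw [div_eq_inv_mul, mul_smul, cross_smul_eq_dot_smul_perp_sub, smul_sub, smul_smul, smul_smul]
  congr 2 <;> field_simp

theorem dot_sub_eq_of_dot_sub_eq_zero {a b m : ℝ × ℝ} (h : dot (a - b) m = 0) (x : ℝ × ℝ) :
    dot (a - x) m = dot (b - x) m := by
  simp only [dot, Prod.fst_sub, Prod.snd_sub] at h ⊢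
  linarith

theorem Fin.sum_sub_one_sub_eq_zero {M : Type*} [AddCommGroup M] {n : ℕ} [NeZero n]
    (f : Fin n → M) : ∑ k : Fin n, (f (k - 1) - f k) = 0 := by
  rw [Finset.sum_sub_distrib, sub_eq_zero]
  exact Fintype.sum_equiv (Equiv.subRight 1) _ _ fun _ => rfl

theorem sum_div_sum_smul_eq_of_sum_smul_sub_eq_zero {ι 𝕜 E : Type*} [Fintype ι] [Field 𝕜]
    [AddCommGroup E] [Module 𝕜 E] {c : ι → 𝕜} {p : ι → E} {x : E} (hc : ∑ i, c i ≠ 0)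
    (h : ∑ i, c i • (p i - x) = 0) : ∑ i, (c i / ∑ j, c j) • p i = x := by
  simp only [smul_sub, Finset.sum_sub_distrib, ← Finset.sum_smul, sub_eq_zero] at h
  calc ∑ i, (c i / ∑ j, c j) • p i = (∑ j, c j)⁻¹ • ∑ i, c i • p i := by
        simp only [div_eq_inv_mul, mul_smul, Finset.smul_sum]
    _ = x := by rw [h, smul_smul, inv_mul_cancel₀ hc, one_smul]

section Wachspress

variable {n : ℕ} [NeZero n] {v nrm : Fin n → ℝ × ℝ} {x : ℝ × ℝ}

theorem dot_vertex_sub_eq_dot_prev_vertex_sub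
    (horth : ∀ i, dot (v (i + 1) - v i) (nrm i) = 0) (k : Fin n) :
    dot (v k - x) (nrm (k - 1)) = dot (v (k - 1) - x) (nrm (k - 1)) := by
  have hedge := horth (k - 1)
  rw [sub_add_cancel] at hedge
  exact dot_sub_eq_of_dot_sub_eq_zero hedge x

theorem w_smul_sub_eq (horth : ∀ i, dot (v (i + 1) - v i) (nrm i) = 0)
    (hint : ∀ i, 0 < dot (v i - x) (nrm i)) (k : Fin n) :
    w v nrm k x • (v k - x) =
      (dot (v (k - 1) - x) (nrm (k - 1)))⁻¹ • perp (nrm (k - 1)) -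
        (dot (v k - x) (nrm k))⁻¹ • perp (nrm k) := by
  have hprev := dot_vertex_sub_eq_dot_prev_vertex_sub (x := x) horth k
  rw [w, ← hprev]
  exact cross_div_dot_mul_dot_smul (hprev ▸ (hint (k - 1)).ne') (hint k).ne'

theorem sum_w_smul_sub_eq_zero (horth : ∀ i, dot (v (i + 1) - v i) (nrm i) = 0)
    (hint : ∀ i, 0 < dot (v i - x) (nrm i)) : ∑ k, w v nrm k x • (v k - x) = 0 := by
  simp only [w_smul_sub_eq horth hint]
  exact Fin.sum_sub_one_sub_eq_zero fun i => (dot (v i - x) (nrm i))⁻¹ • perp (nrm i)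

theorem w_pos (hconv : ∀ i, 0 < cross (nrm (i - 1)) (nrm i))
    (hint : ∀ i, 0 < dot (v i - x) (nrm i)) (k : Fin n) : 0 < w v nrm k x :=
  div_pos (hconv k) (mul_pos (hint (k - 1)) (hint k))

end Wachspress

theorem wachspress_linear_precision_general {n : ℕ} [NeZero n]
    (v nrm : Fin n → ℝ × ℝ)
    (horth : ∀ i, dot (v (i + 1) - v i) (nrm i) = 0)
    (hconv : ∀ i, 0 < cross (nrm (i - 1)) (nrm i))
    (x : ℝ × ℝ)
    (hint : ∀ i, 0 < dot (v i - x) (nrm i)) :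
    ∑ k : Fin n, φ v nrm k x • v k = x := by
  have hsum : 0 < ∑ j, w v nrm j x :=
    Finset.sum_pos (fun j _ => w_pos hconv hint j) Finset.univ_nonempty
  exact sum_div_sum_smul_eq_of_sum_smul_sub_eq_zero hsum.ne' (sum_w_smul_sub_eq_zero horth hint)

/-- Linear precision of the Wachspress coordinates on a strictly convex
polygon. -/
theorem wachspress_linear_precision {n : ℕ} [NeZero n] (hn : 3 ≤ n)
    (v nrm : Fin n → ℝ × ℝ)
    (hunit : ∀ i, (nrm i).1 ^ 2 + (nrm i).2 ^ 2 = 1)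
    (horth : ∀ i, dot (v (i + 1) - v i) (nrm i) = 0)
    (hconv : ∀ i, 0 < cross (nrm (i - 1)) (nrm i))
    (x : ℝ × ℝ)
    (hint : ∀ i, 0 < dot (v i - x) (nrm i)) :
    ∑ k : Fin n, φ v nrm k x • v k = x :=
  wachspress_linear_precision_general v nrm horth hconv x hint
end
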